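/- arXiv:2502.12518 — 4 statements merged into one kernel-verified Lean document; each statement's English description precedes it below -/
import Mathlib

section
/- Let A, B ∈ F_q^{k×n} and let U = rowspace(I_k | A), V = rowspace(I_k | B) be the corresponding lifted subspaces of F_q^{k+n}. Then d_S(U,V) = 2·rank(A - B). Consequently, lifting a (k×n, d)_q rank-metric code yields a (k+n, 2d, {k})_q constant dimension code of the same cardinality. -/
/-- The subspace distance `d_S(U,V) = dim(U+V) - dim(U∩V)` on subspaces of `F^ι`. -/
noncomputable def sdist {F : Type*} [Field F] {ι : Type*} (U V : Submodule F (ι → F)) : ℕ :=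
  Module.finrank F ↥(U ⊔ V) - Module.finrank F ↥(U ⊓ V)

/-- The lifting `A ↦ rowspace(I_k | A)` of a `k×n` matrix to a `k`-dimensional subspace
of `F_q^{k+n}`. -/
def liftSub {F : Type*} [Field F] {k n : ℕ} (A : Matrix (Fin k) (Fin n) F) :
    Submodule F (Fin k ⊕ Fin n → F) :=
  Submodule.span F (Set.range (Matrix.fromCols (1 : Matrix (Fin k) (Fin k) F) A))


/-! If `x = y ᵥ* [I | A] = z ᵥ* [I | B]`, the identity blocks force `y = z` and then
`y ᵥ* (A - B) = 0`; so `U ⊓ V` is the injective image of the left kernel of `A - B` and has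
dimension `k - rank (A - B)`. Since `dim U = dim V = k`, Grassmann's formula gives
`d_S(U, V) = 2 (k - dim (U ⊓ V)) = 2 rank (A - B)`. -/

open Matrix Module

section Semiring

variable {R : Type*} [Semiring R] {m n : Type*} [Fintype m] [DecidableEq m]

theorem Matrix.vecMul_fromCols_one (A : Matrix m n R) (y : m → R) :
    y ᵥ* fromCols 1 A = Sum.elim y (y ᵥ* A) := by
  rw [vecMul_fromCols, vecMul_one]

theorem Matrix.vecMul_fromCols_one_injective (A : Matrix m n R) :
    Function.Injective (fromCols (1 : Matrix m m R) A).vecMul := fun y z h => by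
  simpa [vecMul_fromCols_one] using congrArg (· ∘ Sum.inl) h

end Semiring

section Field

variable {F : Type*} [Field F] {m n : Type*} [Fintype m] [DecidableEq m]

theorem Matrix.finrank_range_vecMulLinear_fromCols_one (A : Matrix m n F) :
    finrank F (LinearMap.range (fromCols (1 : Matrix m m F) A).vecMulLinear) = Fintype.card m := by
  rw [LinearMap.finrank_range_of_inj (vecMul_fromCols_one_injective A),
    finrank_fintype_fun_eq_card]

theorem Matrix.range_vecMulLinear_fromCols_one_inf (A B : Matrix m n F) :
    LinearMap.range (fromCols (1 : Matrix m m F) A).vecMulLinear ⊓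
        LinearMap.range (fromCols (1 : Matrix m m F) B).vecMulLinear =
      (LinearMap.ker (A - B).vecMulLinear).map (fromCols (1 : Matrix m m F) A).vecMulLinear := by
  ext x
  simp only [Submodule.mem_inf, LinearMap.mem_range, Submodule.mem_map, LinearMap.mem_ker,
    vecMulLinear_apply, vecMul_fromCols_one, vecMul_sub, sub_eq_zero]
  constructor
  · rintro ⟨⟨y, rfl⟩, ⟨z, hzy⟩⟩
    obtain rfl : z = y := by simpa using congrArg (· ∘ Sum.inl) hzy
    exact ⟨z, by simpa using (congrArg (· ∘ Sum.inr) hzy).symm, rfl⟩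
  · rintro ⟨y, hAB, rfl⟩
    exact ⟨⟨y, rfl⟩, ⟨y, by rw [hAB]⟩⟩

theorem Matrix.finrank_range_vecMulLinear_fromCols_one_inf_add_rank [Fintype n]
    (A B : Matrix m n F) :
    finrank F ↥(LinearMap.range (fromCols (1 : Matrix m m F) A).vecMulLinear ⊓
        LinearMap.range (fromCols (1 : Matrix m m F) B).vecMulLinear) + (A - B).rank =
      Fintype.card m := by
  rw [range_vecMulLinear_fromCols_one_inf, ← LinearEquiv.finrank_eq
    (Submodule.equivMapOfInjective _ (vecMul_fromCols_one_injective A) _),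
    rank_eq_finrank_span_row, ← range_vecMulLinear, add_comm,
    LinearMap.finrank_range_add_finrank_ker, finrank_fintype_fun_eq_card]

end Field

theorem Matrix.rank_eq_zero_iff {F : Type*} [Field F] {m n : Type*} [Fintype m] [Fintype n]
    (A : Matrix m n F) : A.rank = 0 ↔ A = 0 := by
  rw [rank_eq_finrank_span_row, Submodule.finrank_eq_zero, Submodule.span_eq_bot,
    Set.forall_mem_range]
  exact funext_iff.symm

theorem sdist_self {F : Type*} [Field F] {ι : Type*} (U : Submodule F (ι → F)) :
    sdist U U = 0 := by
  rw [sdist, sup_idem, inf_idem, Nat.sub_self]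

section Lift

variable {F : Type*} [Field F] {k n : ℕ}

theorem liftSub_eq_range (A : Matrix (Fin k) (Fin n) F) :
    liftSub A = LinearMap.range (fromCols (1 : Matrix (Fin k) (Fin k) F) A).vecMulLinear :=
  (range_vecMulLinear _).symm

theorem finrank_liftSub (A : Matrix (Fin k) (Fin n) F) : finrank F (liftSub A) = k := by
  rw [liftSub_eq_range, finrank_range_vecMulLinear_fromCols_one, Fintype.card_fin]

theorem sdist_liftSub (A B : Matrix (Fin k) (Fin n) F) :
    sdist (liftSub A) (liftSub B) = 2 * (A - B).rank := by
  have hinf := finrank_range_vecMulLinear_fromCols_one_inf_add_rank A B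
  have hsup := Submodule.finrank_sup_add_finrank_inf_eq (liftSub A) (liftSub B)
  rw [finrank_liftSub, finrank_liftSub] at hsup
  rw [← liftSub_eq_range, ← liftSub_eq_range, Fintype.card_fin] at hinf
  rw [sdist]
  omega

theorem liftSub_injective : Function.Injective (liftSub (F := F) (k := k) (n := n)) :=
  fun A B h => by
    have hrank := sdist_liftSub A B
    rw [h, sdist_self] at hrank
    exact sub_eq_zero.mp ((rank_eq_zero_iff _).mp (by omega))

end Lift

theorem lifted_rank_metric_code_general {F : Type*} [Field F] {k n : ℕ}
    (M : Set (Matrix (Fin k) (Fin n) F)) (d : ℕ)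
    (hM : ∀ A ∈ M, ∀ B ∈ M, A ≠ B → d ≤ (A - B).rank) :
    (∀ A B : Matrix (Fin k) (Fin n) F, sdist (liftSub A) (liftSub B) = 2 * (A - B).rank) ∧
    (∀ A : Matrix (Fin k) (Fin n) F, Module.finrank F ↥(liftSub A) = k) ∧
    Set.InjOn (liftSub (F := F) (k := k) (n := n)) M ∧
    (∀ A ∈ M, ∀ B ∈ M, A ≠ B → 2 * d ≤ sdist (liftSub A) (liftSub B)) := by
  refine ⟨sdist_liftSub, finrank_liftSub, liftSub_injective.injOn, fun A hA B hB hAB => ?_⟩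
  rw [sdist_liftSub]
  exact Nat.mul_le_mul_left 2 (hM A hA B hB hAB)

/-- For `A, B ∈ F_q^{k×n}` and the lifted subspaces `U = rowspace(I_k|A)`,
`V = rowspace(I_k|B)` of `F_q^{k+n}`, one has `d_S(U,V) = 2·rank(A-B)`.
Consequently, lifting a `(k×n, d)_q` rank-metric code `M` yields a `(k+n, 2d, {k})_q`
constant dimension code of the same cardinality: the lift is injective on `M`, every
lifted subspace has dimension `k`, and distinct codewords give subspaces at subspace
distance at least `2d`. -/
theorem lifted_rank_metric_code {F : Type*} [Field F] [Fintype F] {k n : ℕ}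
    (M : Set (Matrix (Fin k) (Fin n) F)) (d : ℕ)
    (hM : ∀ A ∈ M, ∀ B ∈ M, A ≠ B → d ≤ (A - B).rank) :
    (∀ A B : Matrix (Fin k) (Fin n) F, sdist (liftSub A) (liftSub B) = 2 * (A - B).rank) ∧
    (∀ A : Matrix (Fin k) (Fin n) F, Module.finrank F ↥(liftSub A) = k) ∧
    Set.InjOn (liftSub (F := F) (k := k) (n := n)) M ∧
    (∀ A ∈ M, ∀ B ∈ M, A ≠ B → 2 * d ≤ sdist (liftSub A) (liftSub B)) :=
  lifted_rank_metric_code_general M d hM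
end

section
/- Let C_F be an (F, M, d)_q Ferrers diagram rank-metric code for an m×n Ferrers diagram F. For 0 ≤ i ≤ d-1, let v_i be the number of dots of F remaining after deleting the top i rows and the rightmost d-1-i columns. Then M ≤ q^{min_i v_i}. -/
/-! Fix `i < d` and put `k = d - 1 - i`. Two codewords that agree on the `v_i` dots surviving
the deletion of the top `i` rows and the rightmost `k` columns differ by a matrix supported on
`i` rows and `k` columns, hence of rank at most `i + k < d`. So restriction to those dots is
injective on the code, and `|C| ≤ q ^ v_i`. -/

open Finset

namespace Matrix

variable {F : Type*} [Field F] {m n : Type*} [Fintype n]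

theorem rank_add_le (A B : Matrix m n F) : (A + B).rank ≤ A.rank + B.rank := by
  rw [rank, rank, rank, mulVecLin_add]
  exact (Submodule.finrank_mono (LinearMap.range_add_le _ _)).trans
    (Submodule.finrank_add_le_finrank_add_finrank _ _)

theorem rank_le_card_of_eq_zero_of_notMem_cols (A : Matrix m n F) (t : Finset n)
    (h : ∀ i, ∀ j ∉ t, A i j = 0) : A.rank ≤ #t := by
  classical
  have hcols : Set.range A.col ⊆ Submodule.span F (t.image A.col : Set (m → F)) := by
    rintro _ ⟨j, rfl⟩
    by_cases hj : j ∈ t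
    · exact Submodule.subset_span (mem_image_of_mem _ hj)
    · have : A.col j = 0 := funext fun i => h i j hj
      simp [this]
  rw [rank_eq_finrank_span_cols]
  calc Module.finrank F (Submodule.span F (Set.range A.col))
      ≤ Module.finrank F (Submodule.span F (t.image A.col : Set (m → F))) :=
        Submodule.finrank_mono (Submodule.span_le.2 hcols)
    _ ≤ #(t.image A.col) := finrank_span_finset_le_card _
    _ ≤ #t := card_image_le

theorem rank_le_card_of_eq_zero_of_notMem_rows [Fintype m] (A : Matrix m n F) (s : Finset m)
    (h : ∀ i ∉ s, ∀ j, A i j = 0) : A.rank ≤ #s := by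
  rw [← rank_transpose]
  exact Aᵀ.rank_le_card_of_eq_zero_of_notMem_cols s fun j i hi => h i hi j

theorem rank_le_card_add_card_of_eq_zero [Fintype m] (A : Matrix m n F) (s : Finset m)
    (t : Finset n) (h : ∀ i ∉ s, ∀ j ∉ t, A i j = 0) : A.rank ≤ #s + #t := by
  classical
  set R : Matrix m n F := of fun i j => if i ∈ s then A i j else 0
  calc A.rank = (R + (A - R)).rank := by rw [add_sub_cancel]
    _ ≤ R.rank + (A - R).rank := rank_add_le _ _
    _ ≤ #s + #t := by
      gcongr
      · exact R.rank_le_card_of_eq_zero_of_notMem_rows s fun i hi j => by simp [R, hi]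
      · refine (A - R).rank_le_card_of_eq_zero_of_notMem_cols t fun i j hj => ?_
        by_cases hi : i ∈ s <;> simp [R, hi, h i _ j hj]

theorem card_le_pow_card_of_rank_sub_lt [Fintype F] {C : Finset (Matrix m n F)} {d : ℕ}
    (S : Finset (m × n)) (hdist : ∀ A ∈ C, ∀ B ∈ C, A ≠ B → d ≤ (A - B).rank)
    (hS : ∀ A ∈ C, ∀ B ∈ C, (∀ p ∈ S, A p.1 p.2 = B p.1 p.2) → (A - B).rank < d) :
    #C ≤ Fintype.card F ^ #S := by
  classical
  let restrict (A : Matrix m n F) : S → F := fun p => A p.1.1 p.1.2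
  calc #C ≤ #(univ : Finset (S → F)) := by
        refine card_le_card_of_injOn restrict (fun _ _ => mem_coe.2 (mem_univ _)) ?_
        intro A hA B hB hAB
        by_contra hne
        exact (hS A hA B hB fun p hp => congrFun hAB ⟨p, hp⟩).not_ge (hdist A hA B hB hne)
    _ = Fintype.card F ^ #S := by simp

end Matrix

section Ferrers

variable {m n : ℕ}

/-- Column `j` of the diagram holds the dots in rows `< γ j`; these are the dots left after
deleting the top `i` rows and the rightmost `k` columns. -/
def ferrersRemainingDots (γ : ℕ → ℕ) (i k : ℕ) : Finset (Fin m × Fin n) :=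
  {p | i ≤ p.1.val ∧ p.1.val < γ p.2 ∧ p.2.val < n - k}

theorem card_ferrersRemainingDots_le (γ : ℕ → ℕ) (i k : ℕ) :
    #(ferrersRemainingDots (m := m) (n := n) γ i k) ≤ ∑ j ∈ range (n - k), (γ j - i) := by
  let column (p : Fin m × Fin n) : Σ _ : ℕ, ℕ := ⟨p.2, p.1⟩
  calc #(ferrersRemainingDots γ i k)
      ≤ #((range (n - k)).sigma fun j => Ico i (γ j)) := by
        refine card_le_card_of_injOn column (fun p hp => ?_) (fun p _ p' _ h => ?_)
        · simp only [ferrersRemainingDots, coe_filter, mem_univ, true_and, Set.mem_ofPred_eq] at hp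
          simp [column, hp.1, hp.2.1, hp.2.2]
        · simp only [column, Sigma.mk.injEq, heq_eq_eq] at h
          exact Prod.ext (Fin.ext h.2) (Fin.ext h.1)
    _ = ∑ j ∈ range (n - k), (γ j - i) := by simp

theorem Matrix.rank_le_of_eq_zero_off_ferrersRemainingDots {F : Type*} [Field F]
    (A : Matrix (Fin m) (Fin n) F) {γ : ℕ → ℕ} {i k : ℕ}
    (hsupp : ∀ (r : Fin m) (c : Fin n), ¬ (r : ℕ) < γ c → A r c = 0)
    (hS : ∀ p ∈ ferrersRemainingDots γ i k, A p.1 p.2 = 0) : A.rank ≤ i + k := by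
  have hrows : #{r : Fin m | r < i} ≤ i := Fin.card_filter_val_lt.trans_le (min_le_right _ _)
  have hcols : #{c : Fin n | ¬ c < n - k} ≤ k := by
    have := card_filter_add_card_filter_not (s := univ) fun c : Fin n => (c : ℕ) < n - k
    rw [Fin.card_filter_val_lt, card_univ, Fintype.card_fin] at this
    omega
  refine (A.rank_le_card_add_card_of_eq_zero _ _ fun r hr c hc => ?_).trans
    (add_le_add hrows hcols)
  simp only [mem_filter, mem_univ, true_and, not_lt, not_le] at hr hc
  by_cases hrc : (r : ℕ) < γ c
  · exact hS (r, c) (by simp [ferrersRemainingDots, hr, hrc, hc])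
  · exact hsupp r c hrc

end Ferrers

theorem ferrers_singleton_bound_general {F : Type*} [Field F] [Fintype F] {q m n d : ℕ}
    (hq : Fintype.card F = q) (hd : 0 < d)
    (γ : ℕ → ℕ)
    (C : Finset (Matrix (Fin m) (Fin n) F))
    (hsupp : ∀ A ∈ C, ∀ (i : Fin m) (j : Fin n), ¬ ((i : ℕ) < γ (j : ℕ)) → A i j = 0)
    (hdist : ∀ A ∈ C, ∀ B ∈ C, A ≠ B → d ≤ (A - B).rank) :
    C.card ≤ q ^ ((Finset.range d).inf' (Finset.nonempty_range_iff.mpr hd.ne') fun i =>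
      ∑ j ∈ Finset.range (n - (d - 1 - i)), (γ j - i)) := by
  obtain ⟨i, hi, hinf⟩ := exists_mem_eq_inf' (nonempty_range_iff.mpr hd.ne')
    fun i => ∑ j ∈ range (n - (d - 1 - i)), (γ j - i)
  rw [mem_range] at hi
  set S := ferrersRemainingDots (m := m) (n := n) γ i (d - 1 - i)
  have hS : ∀ A ∈ C, ∀ B ∈ C, (∀ p ∈ S, A p.1 p.2 = B p.1 p.2) → (A - B).rank < d := by
    intro A hA B hB hAB
    have := (A - B).rank_le_of_eq_zero_off_ferrersRemainingDots
      (fun r c h => by simp [hsupp A hA r c h, hsupp B hB r c h])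
      fun p hp => sub_eq_zero.2 (hAB p hp)
    omega
  rw [hinf, ← hq]
  calc #C ≤ Fintype.card F ^ #S := Matrix.card_le_pow_card_of_rank_sub_lt S hdist hS
    _ ≤ _ := pow_le_pow_right₀ Fintype.card_pos (card_ferrersRemainingDots_le γ i _)

/-- Etzion–Silberstein Singleton-like bound for Ferrers diagram rank-metric codes.
An `m×n` Ferrers diagram is described by its column dot-counts `γ 0 ≤ γ 1 ≤ ... ≤ γ (n-1) = m`
with every column nonempty (the dots of column `j` occupy the top `γ j` rows, and rows are
right-justified). Let `C` be an `(F, M, d)_q` FDRMC: a set of matrices in `F_q^{m×n}`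
supported on the dots of the diagram with pairwise rank distance at least `d`.
For `0 ≤ i ≤ d-1` let `v_i` be the number of dots remaining after deleting the top `i`
rows and the rightmost `d-1-i` columns. Then `|C| ≤ q^{min_i v_i}`. -/
theorem ferrers_singleton_bound {F : Type*} [Field F] [Fintype F] {q m n d : ℕ}
    (hq : Fintype.card F = q) (hn : 0 < n) (hd : 0 < d)
    (γ : ℕ → ℕ) (hmono : Monotone γ)
    (hpos : ∀ j < n, 1 ≤ γ j) (hle : ∀ j < n, γ j ≤ m) (hlast : γ (n - 1) = m)
    (C : Finset (Matrix (Fin m) (Fin n) F))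
    (hsupp : ∀ A ∈ C, ∀ (i : Fin m) (j : Fin n), ¬ ((i : ℕ) < γ (j : ℕ)) → A i j = 0)
    (hdist : ∀ A ∈ C, ∀ B ∈ C, A ≠ B → d ≤ (A - B).rank) :
    C.card ≤ q ^ ((Finset.range d).inf' (Finset.nonempty_range_iff.mpr hd.ne') fun i =>
      ∑ j ∈ Finset.range (n - (d - 1 - i)), (γ j - i)) :=
  ferrers_singleton_bound_general hq hd γ C hsupp hdist
end

section
/- Let F = (F1 F2; O F3) be an m×n Ferrers diagram where F2 is an a×b full subdiagram (top a rows, rightmost b columns). Let D2 be an (a×b, d; r)_q rank-restricted rank-metric code, and let D1, D3 be FDRMCs on F1 and F3 with minimum rank distance d. Then C_F = {(D1 D2; O D3) : D_i ∈ D_i} is an (F, |D1||D2||D3|, d; a, b, r)_q rank-restricted Ferrers diagram rank-metric code. -/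
open Matrix

lemma block_RFDRMC_col_rank_aux {R : Type*} [Field R] {m n q : Type*} [Fintype m] [Fintype n]
    [Fintype q] (B : Matrix m n R) (g : q → n) : (B.submatrix id g).rank ≤ B.rank := by
  rw [Matrix.rank_eq_finrank_span_cols, Matrix.rank_eq_finrank_span_cols]
  apply Submodule.finrank_mono
  apply Submodule.span_mono
  rintro _ ⟨j, rfl⟩
  exact ⟨g j, rfl⟩

lemma block_RFDRMC_rank_submatrix_le {R : Type*} [Field R] {m n p q : Type*} [Fintype m]
    [Fintype n] [Fintype p] [Fintype q] (A : Matrix m n R) (f : p → m) (g : q → n) :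
    (A.submatrix f g).rank ≤ A.rank := by
  calc (A.submatrix f g).rank = ((A.submatrix f id).submatrix id g).rank := by
        rw [Matrix.submatrix_submatrix]; rfl
    _ ≤ (A.submatrix f id).rank := block_RFDRMC_col_rank_aux _ _
    _ = ((Aᵀ.submatrix id f)ᵀ).rank := by
        rw [Matrix.transpose_submatrix, Matrix.transpose_transpose]
    _ = (Aᵀ.submatrix id f).rank := Matrix.rank_transpose _
    _ ≤ Aᵀ.rank := block_RFDRMC_col_rank_aux _ _
    _ = A.rank := Matrix.rank_transpose _


/-- Block construction of rank-restricted Ferrers diagram rank-metric codes.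
The `m×n` Ferrers diagram `F = (F1 F2; O F3)` is described by its monotone column
dot-counts `γ` (dots of a column occupy its top rows): the left `n-b` columns have at
most `a` dots (so the bottom-left block is empty) and the right `b` columns have at least
`a` dots (so `F2`, the top `a` rows of the rightmost `b` columns, is a full `a×b`
subdiagram). Rows are indexed by `Fin a ⊕ Fin (m-a)` and columns by `Fin (n-b) ⊕ Fin b`.
Let `D2s` be an `(a×b, d; r)_q` rank-restricted rank-metric code, and `D1s`, `D3s` FDRMCs
on `F1`, `F3` with minimum rank distance `d`. Then
`C_F = {(D1 D2; O D3)}` is an `(F, |D1s||D2s||D3s|, d; a, b, r)_q` RFDRMC: its codewords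
are supported on `F`, the top-right `a×b` block of each codeword has rank at most `r`,
distinct codewords have rank distance at least `d`, and `|C_F| = |D1s|·|D2s|·|D3s|`. -/
theorem block_RFDRMC {F : Type*} [Field F] [Fintype F] [DecidableEq F] {m n a b d r : ℕ}
    (ha : a ≤ m) (hb : b ≤ n)
    (γ : ℕ → ℕ) (hmono : Monotone γ)
    (hγm : ∀ j < n, γ j ≤ m) (hleft : ∀ j, j < n - b → γ j ≤ a)
    (hright : ∀ j < n, n - b ≤ j → a ≤ γ j)
    (D1s : Finset (Matrix (Fin a) (Fin (n - b)) F))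
    (D2s : Finset (Matrix (Fin a) (Fin b) F))
    (D3s : Finset (Matrix (Fin (m - a)) (Fin b) F))
    (h1supp : ∀ D ∈ D1s, ∀ (i : Fin a) (j : Fin (n - b)), ¬ ((i : ℕ) < γ (j : ℕ)) → D i j = 0)
    (h1dist : ∀ D ∈ D1s, ∀ D' ∈ D1s, D ≠ D' → d ≤ (D - D').rank)
    (h2rank : ∀ D ∈ D2s, D.rank ≤ r)
    (h2dist : ∀ D ∈ D2s, ∀ D' ∈ D2s, D ≠ D' → d ≤ (D - D').rank)
    (h3supp : ∀ D ∈ D3s, ∀ (i : Fin (m - a)) (j : Fin b),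
      ¬ (a + (i : ℕ) < γ (n - b + (j : ℕ))) → D i j = 0)
    (h3dist : ∀ D ∈ D3s, ∀ D' ∈ D3s, D ≠ D' → d ≤ (D - D').rank) :
    let C := (D1s ×ˢ D2s ×ˢ D3s).image fun p =>
      Matrix.fromBlocks p.1 p.2.1 (0 : Matrix (Fin (m - a)) (Fin (n - b)) F) p.2.2
    -- supported on the Ferrers diagram `F`
    (∀ X ∈ C, (∀ (i : Fin a) (j : Fin (n - b)), ¬ ((i : ℕ) < γ (j : ℕ)) →
        X (Sum.inl i) (Sum.inl j) = 0) ∧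
      (∀ (i : Fin (m - a)) (j : Fin (n - b)), X (Sum.inr i) (Sum.inl j) = 0) ∧
      (∀ (i : Fin (m - a)) (j : Fin b), ¬ (a + (i : ℕ) < γ (n - b + (j : ℕ))) →
        X (Sum.inr i) (Sum.inr j) = 0)) ∧
    -- rank restriction on the top `a` rows and rightmost `b` columns
    (∀ X ∈ C, (Matrix.toBlocks₁₂ X).rank ≤ r) ∧
    -- minimum rank distance `d`
    (∀ X ∈ C, ∀ Y ∈ C, X ≠ Y → d ≤ (X - Y).rank) ∧
    -- cardinality
    C.card = D1s.card * D2s.card * D3s.card := by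

  intro C
  have memC : ∀ X ∈ C, ∃ p ∈ D1s ×ˢ D2s ×ˢ D3s,
      X = Matrix.fromBlocks p.1 p.2.1 0 p.2.2 := by
    intro X hX
    obtain ⟨p, hp, rfl⟩ := Finset.mem_image.mp hX
    exact ⟨p, hp, rfl⟩
  refine ⟨?_, ?_, ?_, ?_⟩
  · intro X hX
    obtain ⟨p, hp, rfl⟩ := memC X hX
    obtain ⟨h1, hp2⟩ := Finset.mem_product.mp hp
    obtain ⟨h2, h3⟩ := Finset.mem_product.mp hp2
    refine ⟨fun i j h => h1supp _ h1 i j h, fun i j => rfl,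
      fun i j h => h3supp _ h3 i j h⟩
  · intro X hX
    obtain ⟨p, hp, rfl⟩ := memC X hX
    obtain ⟨h1, hp2⟩ := Finset.mem_product.mp hp
    obtain ⟨h2, h3⟩ := Finset.mem_product.mp hp2
    rw [Matrix.toBlocks_fromBlocks₁₂]
    exact h2rank _ h2
  · intro X hX Y hY hXY
    obtain ⟨p, hp, rfl⟩ := memC X hX
    obtain ⟨q, hq, rfl⟩ := memC Y hY
    obtain ⟨hp1, hp2'⟩ := Finset.mem_product.mp hp
    obtain ⟨hp2, hp3⟩ := Finset.mem_product.mp hp2'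
    obtain ⟨hq1, hq2'⟩ := Finset.mem_product.mp hq
    obtain ⟨hq2, hq3⟩ := Finset.mem_product.mp hq2'
    set X := Matrix.fromBlocks p.1 p.2.1 0 p.2.2
    set Y := Matrix.fromBlocks q.1 q.2.1 0 q.2.2
    by_cases hA : p.1 = q.1
    · by_cases hD : p.2.2 = q.2.2
      · have hB : p.2.1 ≠ q.2.1 := by
          intro hB
          apply hXY
          show Matrix.fromBlocks _ _ _ _ = Matrix.fromBlocks _ _ _ _
          rw [hA, hB, hD]
        have key : p.2.1 - q.2.1 = (X - Y).submatrix Sum.inl Sum.inr := by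
          ext i j; simp [X, Y]
        calc d ≤ (p.2.1 - q.2.1).rank := h2dist _ hp2 _ hq2 hB
          _ = ((X - Y).submatrix Sum.inl Sum.inr).rank := by rw [key]
          _ ≤ (X - Y).rank := block_RFDRMC_rank_submatrix_le _ _ _
      · have key : p.2.2 - q.2.2 = (X - Y).submatrix Sum.inr Sum.inr := by
          ext i j; simp [X, Y]
        calc d ≤ (p.2.2 - q.2.2).rank := h3dist _ hp3 _ hq3 hD
          _ = ((X - Y).submatrix Sum.inr Sum.inr).rank := by rw [key]
          _ ≤ (X - Y).rank := block_RFDRMC_rank_submatrix_le _ _ _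
    · have key : p.1 - q.1 = (X - Y).submatrix Sum.inl Sum.inl := by
        ext i j; simp [X, Y]
      calc d ≤ (p.1 - q.1).rank := h1dist _ hp1 _ hq1 hA
        _ = ((X - Y).submatrix Sum.inl Sum.inl).rank := by rw [key]
        _ ≤ (X - Y).rank := block_RFDRMC_rank_submatrix_le _ _ _
  · rw [Finset.card_image_of_injective _ ?_, Finset.card_product, Finset.card_product,
      mul_assoc]
    intro p q h
    have h11 := congrArg Matrix.toBlocks₁₁ h
    have h12 := congrArg Matrix.toBlocks₁₂ h
    have h22 := congrArg Matrix.toBlocks₂₂ h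
    simp only [Matrix.toBlocks_fromBlocks₁₁, Matrix.toBlocks_fromBlocks₁₂,
      Matrix.toBlocks_fromBlocks₂₂] at h11 h12 h22
    exact Prod.ext h11 (Prod.ext h12 h22)
end

section
/- Let δ ≥ 2 and k ≥ 3δ. Denoting by C^0 the (2k, 2δ, {k})_q code of the mixed dimension construction and by C the code of the improved construction (adding a multilevel part), the difference of cardinalities satisfies |C| - |C^0| > q^{(δ+1)k - 2δ² - δ}(q^k - 1). -/
/-- The `q`-ary Gaussian binomial coefficient `[a choose b]_q` as a rational number. -/
noncomputable def gaussBinom (q a b : ℕ) : ℚ :=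
  ∏ i ∈ Finset.range b, ((q : ℚ) ^ a - (q : ℚ) ^ i) / ((q : ℚ) ^ b - (q : ℚ) ^ i)

/-- Delsarte's rank-distribution count `D(m,n,d,i)_q`. -/
noncomputable def delsarteD (q m n d i : ℕ) : ℚ :=
  gaussBinom q (min m n) i *
    ∑ j ∈ Finset.range (i - d + 1),
      (-1 : ℚ) ^ j * (q : ℚ) ^ (j * (j - 1) / 2) * gaussBinom q i j *
        ((q : ℚ) ^ (max m n * (i - d - j + 1)) - 1)

/-- `Δ(m,n,d)_q = q^{max{m,n}(min{m,n}-d+1)}`, the size of an MRD code, with the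
convention that it equals `1` when `min{m,n} < d`. -/
noncomputable def deltaMRD (q m n d : ℕ) : ℚ :=
  if min m n < d then 1 else (q : ℚ) ^ (max m n * (min m n - d + 1))

/-- `Δ(m,n,d;r)_q = 1 + Σ_{i=d}^{r} D(m,n,d,i)_q`, the size of the rank-restricted
subcode of a linear MRD code. -/
noncomputable def deltaRes (q m n d r : ℕ) : ℚ :=
  1 + ∑ i ∈ Finset.Icc d r, delsarteD q m n d i

/-! Only two terms of the right-hand side matter. In `Δ(k-δ,k,δ;k-2δ)` the rank-`δ` count is
`D(k-δ,k,δ,δ) = [k-δ choose δ]_q (q^k - 1) ≥ q^{δ(k-2δ)} (q^k - 1)`, and the `j = 1` summand is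
`Δ(k-δ,δ,δ) = q^{k-δ}`; the product of the two is the claimed bound. All other terms are
nonnegative: for Delsarte's counts because the alternating sum defining them has decreasing
terms. With `A = max m n` and `X = q^{A(i-d-j)} ≥ 1`, the ratio of consecutive terms is
`q^j (q^{i-j} - 1)/(q^{j+1} - 1) · (X - 1)/(q^A X - 1)`, whose first factor is below `q^i ≤ q^A`. -/

open Finset

lemma pow_sub_pow_eq_pow_mul {R : Type*} [CommRing R] (x : R) {a t : ℕ} (h : t ≤ a) :
    x ^ a - x ^ t = x ^ t * (x ^ (a - t) - 1) := by
  rw [mul_sub, mul_one, ← pow_add, Nat.add_sub_cancel' h]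

lemma alternating_sum_nonneg {R : Type*} [Ring R] [PartialOrder R] [IsOrderedRing R] :
    ∀ (n : ℕ) (f : ℕ → R), (∀ j < n, 0 ≤ f j) → (∀ j, j + 1 < n → f (j + 1) ≤ f j) →
      0 ≤ ∑ j ∈ range n, (-1 : R) ^ j * f j
  | 0, _, _, _ => by simp
  | 1, f, hf, _ => by simpa using hf 0 one_pos
  | n + 2, f, hf, hanti => by
    have hsplit : ∑ j ∈ range (n + 2), (-1 : R) ^ j * f j
        = (f 0 - f 1) + ∑ j ∈ range n, (-1 : R) ^ j * f (j + 2) := by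
      simp only [sum_range_succ' _ (n + 1), sum_range_succ' _ n, pow_succ]
      simp only [mul_neg, mul_one, neg_neg, neg_mul, pow_zero, one_mul]
      abel
    rw [hsplit]
    exact add_nonneg (sub_nonneg.mpr (hanti 0 (by omega)))
      (alternating_sum_nonneg n (fun j => f (j + 2)) (fun j hj => hf (j + 2) (by omega))
        (fun j hj => hanti (j + 2) (by omega)))

section GaussBinom

variable {q : ℕ}

lemma gaussBinom_eq_prod (hq : 1 < q) {a b : ℕ} (hba : b ≤ a) :
    gaussBinom q a b = ∏ t ∈ range b, ((q : ℚ) ^ (a - t) - 1) / ((q : ℚ) ^ (t + 1) - 1) := by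
  have hden : ∏ t ∈ range b, ((q : ℚ) ^ b - (q : ℚ) ^ t)
      = (∏ t ∈ range b, (q : ℚ) ^ t) * ∏ t ∈ range b, ((q : ℚ) ^ (t + 1) - 1) := by
    rw [← prod_range_reflect (fun t => (q : ℚ) ^ (t + 1) - 1), ← prod_mul_distrib]
    refine prod_congr rfl fun t ht => ?_
    have htb := mem_range.mp ht
    rw [pow_sub_pow_eq_pow_mul _ htb.le, show b - 1 - t + 1 = b - t by omega]
  have hnum : ∏ t ∈ range b, ((q : ℚ) ^ a - (q : ℚ) ^ t)
      = (∏ t ∈ range b, (q : ℚ) ^ t) * ∏ t ∈ range b, ((q : ℚ) ^ (a - t) - 1) := by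
    rw [← prod_mul_distrib]
    exact prod_congr rfl fun t ht => pow_sub_pow_eq_pow_mul _ ((mem_range.mp ht).le.trans hba)
  rw [gaussBinom, prod_div_distrib, prod_div_distrib, hnum, hden,
    mul_div_mul_left _ _ (prod_ne_zero_iff.mpr fun t _ => by positivity)]

lemma gaussBinom_succ (hq : 1 < q) {a b : ℕ} (hba : b < a) :
    gaussBinom q a (b + 1) =
      gaussBinom q a b * (((q : ℚ) ^ (a - b) - 1) / ((q : ℚ) ^ (b + 1) - 1)) := by
  rw [gaussBinom_eq_prod hq hba, gaussBinom_eq_prod hq hba.le, prod_range_succ]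

/-- Each factor satisfies `q^a - q^i ≥ q^(a-b) (q^b - q^i)`. -/
lemma pow_le_gaussBinom (hq : 1 < q) {a b : ℕ} (hba : b ≤ a) :
    (q : ℚ) ^ (b * (a - b)) ≤ gaussBinom q a b := by
  have hq' : (1 : ℚ) < q := by exact_mod_cast hq
  rw [show (q : ℚ) ^ (b * (a - b)) = ∏ _i ∈ range b, (q : ℚ) ^ (a - b) by
    rw [prod_const, card_range, ← pow_mul, mul_comm], gaussBinom]
  refine prod_le_prod (fun _ _ => by positivity) fun i hi => ?_
  have hib := mem_range.mp hi
  have hden : (0 : ℚ) < (q : ℚ) ^ b - (q : ℚ) ^ i := sub_pos.mpr (pow_lt_pow_right₀ hq' hib)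
  rw [le_div_iff₀ hden, mul_sub, ← pow_add, Nat.sub_add_cancel hba]
  have : (q : ℚ) ^ i ≤ (q : ℚ) ^ (a - b) * (q : ℚ) ^ i :=
    le_mul_of_one_le_left (by positivity) (one_le_pow₀ hq'.le)
  linarith

lemma gaussBinom_nonneg (hq : 1 < q) {a b : ℕ} (hba : b ≤ a) : 0 ≤ gaussBinom q a b :=
  (pow_nonneg (Nat.cast_nonneg q) _).trans (pow_le_gaussBinom hq hba)

end GaussBinom

section Delsarte

noncomputable def delsarteTerm (q A d i j : ℕ) : ℚ :=
  (q : ℚ) ^ (j * (j - 1) / 2) * gaussBinom q i j * ((q : ℚ) ^ (A * (i - d - j + 1)) - 1)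

lemma delsarteD_eq_sum (q m n d i : ℕ) :
    delsarteD q m n d i = gaussBinom q (min m n) i *
      ∑ j ∈ range (i - d + 1), (-1 : ℚ) ^ j * delsarteTerm q (max m n) d i j := by
  simp only [delsarteD, delsarteTerm, mul_assoc]

lemma delsarteD_self (q m n d : ℕ) :
    delsarteD q m n d d = gaussBinom q (min m n) d * ((q : ℚ) ^ max m n - 1) := by
  simp [delsarteD, gaussBinom]

variable {q : ℕ}

lemma delsarteTerm_nonneg (hq : 1 < q) {A d i j : ℕ} (hji : j ≤ i) :
    0 ≤ delsarteTerm q A d i j := by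
  have hq' : (1 : ℚ) ≤ q := by exact_mod_cast hq.le
  exact mul_nonneg (mul_nonneg (by positivity) (gaussBinom_nonneg hq hji))
    (sub_nonneg.mpr (one_le_pow₀ hq'))

lemma pow_mul_gaussBinom_ratio_le (hq : 1 < q) {A i j : ℕ} (hji : j ≤ i) (hiA : i ≤ A)
    {X : ℚ} (hX : 1 ≤ X) :
    (q : ℚ) ^ j * (((q : ℚ) ^ (i - j) - 1) / ((q : ℚ) ^ (j + 1) - 1)) * (X - 1) ≤
      (q : ℚ) ^ A * X - 1 := by
  have hq' : (1 : ℚ) < q := by exact_mod_cast hq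
  have hden : (1 : ℚ) ≤ (q : ℚ) ^ (j + 1) - 1 := by
    have hq2 : (2 : ℚ) ≤ q := by exact_mod_cast hq
    linarith [le_self_pow₀ hq'.le (n := j + 1) (by omega)]
  have hnum : (q : ℚ) ^ j * ((q : ℚ) ^ (i - j) - 1) = (q : ℚ) ^ i - (q : ℚ) ^ j :=
    (pow_sub_pow_eq_pow_mul _ hji).symm
  have hij : (q : ℚ) ^ j ≤ (q : ℚ) ^ i := pow_le_pow_right₀ hq'.le hji
  have hqiA : (q : ℚ) ^ i ≤ (q : ℚ) ^ A := pow_le_pow_right₀ hq'.le hiA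
  have hj : (1 : ℚ) ≤ (q : ℚ) ^ j := one_le_pow₀ hq'.le
  calc (q : ℚ) ^ j * (((q : ℚ) ^ (i - j) - 1) / ((q : ℚ) ^ (j + 1) - 1)) * (X - 1)
      = ((q : ℚ) ^ i - (q : ℚ) ^ j) / ((q : ℚ) ^ (j + 1) - 1) * (X - 1) := by
        rw [mul_div_assoc', hnum]
    _ ≤ ((q : ℚ) ^ i - (q : ℚ) ^ j) * (X - 1) :=
        mul_le_mul_of_nonneg_right (div_le_self (by linarith) hden) (by linarith)
    _ ≤ (q : ℚ) ^ A * X - 1 := by nlinarith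

lemma delsarteTerm_succ_le (hq : 1 < q) {A d i j : ℕ} (hiA : i ≤ A) (hj : j < i - d) :
    delsarteTerm q A d i (j + 1) ≤ delsarteTerm q A d i j := by
  have hji : j < i := by omega
  have hexp : A * (i - d - j + 1) = A * (i - d - (j + 1) + 1) + A := by
    rw [show i - d - j = i - d - (j + 1) + 1 by omega]; ring
  have hX : (1 : ℚ) ≤ (q : ℚ) ^ (A * (i - d - (j + 1) + 1)) :=
    one_le_pow₀ (by exact_mod_cast hq.le)
  have hratio := pow_mul_gaussBinom_ratio_le hq hji.le hiA hX
  unfold delsarteTerm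
  rw [Nat.triangle_succ, gaussBinom_succ hq hji, hexp, pow_add, pow_add (q : ℚ) _ A,
    mul_comm _ ((q : ℚ) ^ A)]
  have hPG : 0 ≤ (q : ℚ) ^ (j * (j - 1) / 2) * gaussBinom q i j :=
    mul_nonneg (by positivity) (gaussBinom_nonneg hq hji.le)
  calc _ = (q : ℚ) ^ (j * (j - 1) / 2) * gaussBinom q i j * ((q : ℚ) ^ j *
        (((q : ℚ) ^ (i - j) - 1) / ((q : ℚ) ^ (j + 1) - 1)) *
          ((q : ℚ) ^ (A * (i - d - (j + 1) + 1)) - 1)) := by ring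
    _ ≤ _ := mul_le_mul_of_nonneg_left hratio hPG

lemma delsarteD_nonneg (hq : 1 < q) {m n d i : ℕ} (hi : i ≤ min m n) :
    0 ≤ delsarteD q m n d i := by
  rw [delsarteD_eq_sum]
  exact mul_nonneg (gaussBinom_nonneg hq hi)
    (alternating_sum_nonneg _ _ (fun j hj => delsarteTerm_nonneg hq (by omega))
      fun j hj => delsarteTerm_succ_le hq (hi.trans min_le_max) (by omega))

lemma gaussBinom_mul_lt_deltaRes (hq : 1 < q) {m n d r : ℕ} (hdr : d ≤ r)
    (hr : r ≤ min m n) :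
    gaussBinom q (min m n) d * ((q : ℚ) ^ max m n - 1) < deltaRes q m n d r := by
  rw [← delsarteD_self, deltaRes]
  have := single_le_sum (f := delsarteD q m n d)
    (fun i hi => delsarteD_nonneg hq ((mem_Icc.mp hi).2.trans hr)) (mem_Icc.mpr ⟨le_rfl, hdr⟩)
  linarith

end Delsarte

lemma deltaMRD_pos {q : ℕ} (hq : 0 < q) (m n d : ℕ) : 0 < deltaMRD q m n d := by
  unfold deltaMRD
  split <;> positivity

lemma deltaMRD_self_right (q : ℕ) {m n : ℕ} (hnm : n ≤ m) : deltaMRD q m n n = (q : ℚ) ^ m := by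
  simp [deltaMRD, hnm]

lemma pow_sub_le_sum_deltaMRD {q : ℕ} (hq : 0 < q) {δ k : ℕ} (hδ : 0 < δ) (hk : 2 * δ ≤ k) :
    (q : ℚ) ^ (k - δ) ≤ ∑ j ∈ Icc 1 (k / δ), deltaMRD q (k - j * δ) δ δ := by
  have hmem : 1 ∈ Icc 1 (k / δ) := mem_Icc.mpr ⟨le_rfl, (Nat.le_div_iff_mul_le hδ).mpr (by omega)⟩
  have := single_le_sum (f := fun j => deltaMRD q (k - j * δ) δ δ)
    (fun j _ => (deltaMRD_pos hq _ _ _).le) hmem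
  rwa [one_mul, deltaMRD_self_right q (by omega)] at this

lemma improvement_exponent_eq {δ k : ℕ} (hk : 3 * δ ≤ k) :
    (δ + 1) * k - 2 * δ ^ 2 - δ = δ * (k - 2 * δ) + (k - δ) := by
  obtain ⟨c, rfl⟩ := Nat.exists_eq_add_of_le hk
  rw [show 3 * δ + c - 2 * δ = δ + c by omega, show 3 * δ + c - δ = 2 * δ + c by omega,
    show (δ + 1) * (3 * δ + c) = 2 * δ ^ 2 + (δ * (δ + c) + (2 * δ + c) + δ) by ring,
    Nat.add_sub_cancel_left, Nat.add_sub_cancel]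

/-- Let `q` be a prime power, `δ ≥ 2` and `k ≥ 3δ`. With `C^0` the `(2k, 2δ, {k})_q` code
of the mixed dimension construction and `C` the code of the improved construction, the
difference of cardinalities
`|C| - |C^0| = Δ(k-δ,k,δ; k-2δ)_q · Σ_{j=1}^{⌊k/δ⌋} Δ(k-jδ, δ, δ)_q`
satisfies `|C| - |C^0| > q^{(δ+1)k - 2δ² - δ}(q^k - 1)`. -/
theorem improvement_lower_bound (q δ k : ℕ)
    (hq : ∃ p m : ℕ, p.Prime ∧ 0 < m ∧ q = p ^ m)
    (hδ : 2 ≤ δ) (hk : 3 * δ ≤ k) :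
    (q : ℚ) ^ ((δ + 1) * k - 2 * δ ^ 2 - δ) * ((q : ℚ) ^ k - 1) <
      deltaRes q (k - δ) k δ (k - 2 * δ) *
        ∑ j ∈ Finset.Icc 1 (k / δ), deltaMRD q (k - j * δ) δ δ := by
  obtain ⟨p, m, hp, hm, rfl⟩ := hq
  have hq : 1 < p ^ m := Nat.one_lt_pow hm.ne' hp.one_lt
  set q := p ^ m
  have hqk : (0 : ℚ) ≤ (q : ℚ) ^ k - 1 := sub_nonneg.mpr (one_le_pow₀ (by exact_mod_cast hq.le))
  have hgauss := pow_le_gaussBinom hq (a := k - δ) (b := δ) (by omega)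
  have hres := gaussBinom_mul_lt_deltaRes hq (m := k - δ) (n := k) (d := δ) (r := k - 2 * δ)
    (by omega) (by omega)
  rw [min_eq_left (by omega), max_eq_right (by omega)] at hres
  have hsum := pow_sub_le_sum_deltaMRD (q := q) (by omega) (δ := δ) (k := k) (by omega) (by omega)
  calc (q : ℚ) ^ ((δ + 1) * k - 2 * δ ^ 2 - δ) * ((q : ℚ) ^ k - 1)
      = (q : ℚ) ^ (δ * (k - δ - δ)) * ((q : ℚ) ^ k - 1) * (q : ℚ) ^ (k - δ) := by
        rw [improvement_exponent_eq hk, show k - δ - δ = k - 2 * δ by omega, pow_add]; ring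
    _ ≤ gaussBinom q (k - δ) δ * ((q : ℚ) ^ k - 1) * (q : ℚ) ^ (k - δ) := by gcongr
    _ < deltaRes q (k - δ) k δ (k - 2 * δ) * (q : ℚ) ^ (k - δ) := by gcongr
    _ ≤ _ := mul_le_mul_of_nonneg_left hsum
        ((mul_nonneg (gaussBinom_nonneg hq (by omega)) hqk).trans hres.le)
end
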